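/- Let $n \geq 4$ and $P_n(r) = \frac{b_n}{2} \int_{1-r^2/2}^{1}(1-u^2)^{(n-4)/2}\,du$ for $0 \leq r \leq \sqrt 2$ with $P_n$ extended by $P_n(r) = 1 - P_n(\sqrt{4-r^2})$ for $\sqrt 2 < r \leq 2$ and $P_n(r)=1$ for $r>2$, where $b_n = \frac{2\Gamma((n-1)/2)}{\sqrt{\pi}\Gamma((n-2)/2)}$. Then for any $\alpha > 1$ and $r > 0$, $P_n(\alpha r) \leq \alpha^{n-2} P_n(r)$. -/

import Mathlib

/-- The constant `b_n = 2Γ((n-1)/2) / (√π Γ((n-2)/2))`. -/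
noncomputable def bCoef (n : ℕ) : ℝ :=
  2 * Real.Gamma (((n : ℝ) - 1) / 2) / (Real.sqrt Real.pi * Real.Gamma (((n : ℝ) - 2) / 2))

/-- The normalized spherical cap area for `0 ≤ r ≤ √2`:
`(b_n/2) ∫_{1 - r²/2}^1 (1 - u²)^{(n-4)/2} du`. -/
noncomputable def capArea (n : ℕ) (r : ℝ) : ℝ :=
  bCoef n / 2 * ∫ u in (1 - r ^ 2 / 2)..1, (1 - u ^ 2) ^ (((n : ℝ) - 4) / 2)

/-- The normalized spherical cap area `P_n(r)` extended to all `r > 0`: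
`P_n(r) = 1 - P_n(√(4 - r²))` for `√2 < r ≤ 2` and `P_n(r) = 1` for `r > 2`. -/
noncomputable def capAreaExt (n : ℕ) (r : ℝ) : ℝ :=
  if r ≤ Real.sqrt 2 then capArea n r
  else if r ≤ 2 then 1 - capArea n (Real.sqrt (4 - r ^ 2))
  else 1

/-!
Substituting `u = 1 - x²/2` gives `P_n(r) = (b_n/2) ∫₀^(min r 2) φ` with
`φ(x) = x^(n-3) (1 - x²/4)^((n-4)/2)` (`capDensity n`): directly for `r ≤ √2`, and beyond that
because `(1 - u²)^((n-4)/2)` is even and `(b_n/2) ∫₋₁¹ (1 - u²)^((n-4)/2) du = 1`, a Beta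
integral. The second factor of `φ` decreases, so `φ(αx) ≤ α^(n-3) φ(x)` as long as `αx ≤ 2`, and
the substitution `x = αt` gives the claim when `αr ≤ 2`. When `αr > 2`, apply this to
`2/α ≤ min r 2` in place of `r`.
-/

open MeasureTheory intervalIntegral Set

lemma sub_four_div_two_nonneg {n : ℕ} (hn : 4 ≤ n) : (0 : ℝ) ≤ ((n : ℝ) - 4) / 2 := by
  have : (4 : ℝ) ≤ n := by exact_mod_cast hn
  linarith

lemma sq_rpow_natCast_div_two {x : ℝ} (hx : 0 ≤ x) (k : ℕ) : (x ^ 2) ^ ((k : ℝ) / 2) = x ^ k := by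
  rw [← Real.rpow_natCast x 2, ← Real.rpow_mul hx, Nat.cast_ofNat,
    mul_div_cancel₀ _ two_ne_zero, Real.rpow_natCast]

lemma bCoef_pos {n : ℕ} (hn : 3 ≤ n) : 0 < bCoef n := by
  have : (3 : ℝ) ≤ n := by exact_mod_cast hn
  have := Real.Gamma_pos_of_pos (s := ((n : ℝ) - 1) / 2) (by linarith)
  have := Real.Gamma_pos_of_pos (s := ((n : ℝ) - 2) / 2) (by linarith)
  unfold bCoef
  positivity

lemma continuous_one_sub_sq_rpow {s : ℝ} (hs : 0 ≤ s) : Continuous fun u : ℝ => (1 - u ^ 2) ^ s :=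
  (continuous_const.sub (continuous_pow 2)).rpow_const fun _ => Or.inr hs

lemma integral_neg_add_integral_of_even {g : ℝ → ℝ} (hg : Continuous g)
    (heven : ∀ x, g (-x) = g x) (a c : ℝ) :
    (∫ x in -a..c, g x) + ∫ x in a..c, g x = ∫ x in -c..c, g x := by
  have hreflect : ∫ x in a..c, g x = ∫ x in -c..-a, g x := by
    rw [← integral_comp_neg]
    simp only [heven]
  rw [hreflect, add_comm,
    integral_add_adjacent_intervals (hg.intervalIntegrable _ _) (hg.intervalIntegrable _ _)]

lemma integral_rpow_mul_one_sub_rpow {a b : ℝ} (ha : 0 < a) (hb : 0 < b) :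
    ∫ x in (0 : ℝ)..1, x ^ (a - 1) * (1 - x) ^ (b - 1)
      = Real.Gamma a * Real.Gamma b / Real.Gamma (a + b) := by
  have hbeta := Complex.betaIntegral_eq_Gamma_mul_div a b (by simpa) (by simpa)
  rw [Complex.betaIntegral, ← Complex.ofReal_add, Complex.Gamma_ofReal, Complex.Gamma_ofReal,
    Complex.Gamma_ofReal] at hbeta
  apply Complex.ofReal_injective
  rw [← intervalIntegral.integral_ofReal]
  push_cast
  rw [← hbeta]
  refine integral_congr fun x hx => ?_
  rw [uIcc_of_le zero_le_one] at hx
  rw [Complex.ofReal_cpow hx.1, Complex.ofReal_cpow (by linarith [hx.2])]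
  simp only [Complex.ofReal_sub, Complex.ofReal_one]

lemma two_mul_integral_one_sub_sq_rpow (s : ℝ) :
    2 * ∫ u in (0 : ℝ)..1, (1 - u ^ 2) ^ s
      = ∫ x in (0 : ℝ)..1, x ^ (-(1 : ℝ) / 2) * (1 - x) ^ s := by
  have himage : (fun u : ℝ => u ^ 2) '' Ioo 0 1 = Ioo 0 1 := by
    ext x
    constructor
    · rintro ⟨u, ⟨hu0, hu1⟩, rfl⟩
      exact ⟨by positivity, by nlinarith⟩
    · rintro ⟨hx0, hx1⟩
      refine ⟨Real.sqrt x, ⟨Real.sqrt_pos.mpr hx0, ?_⟩, Real.sq_sqrt hx0.le⟩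
      rwa [Real.sqrt_lt' one_pos, one_pow]
  have hcv := integral_image_eq_integral_abs_deriv_smul (s := Ioo (0 : ℝ) 1)
    (f' := fun u => 2 * u) measurableSet_Ioo
    (fun u _ => by simpa using (hasDerivAt_pow 2 u).hasDerivWithinAt)
    (fun u hu v hv h => by nlinarith [hu.1, hv.1]) (fun x => x ^ (-(1 : ℝ) / 2) * (1 - x) ^ s)
  rw [himage] at hcv
  rw [integral_of_le zero_le_one, integral_of_le zero_le_one, integral_Ioc_eq_integral_Ioo,
    integral_Ioc_eq_integral_Ioo, hcv, ← MeasureTheory.integral_const_mul]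
  refine setIntegral_congr_fun measurableSet_Ioo fun u ⟨hu0, _⟩ => ?_
  have hinv : (u ^ 2) ^ (-(1 : ℝ) / 2) = u⁻¹ := by
    rw [← Real.rpow_natCast u 2, ← Real.rpow_mul hu0.le,
      show ((2 : ℕ) : ℝ) * (-1 / 2) = -1 by norm_num, Real.rpow_neg_one]
  simp only [smul_eq_mul, abs_of_pos (by linarith : (0 : ℝ) < 2 * u), hinv]
  field_simp

lemma integral_one_sub_sq_rpow {s : ℝ} (hs : 0 ≤ s) :
    ∫ u in (-1 : ℝ)..1, (1 - u ^ 2) ^ s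
      = Real.sqrt Real.pi * Real.Gamma (s + 1) / Real.Gamma (s + 3 / 2) := by
  have heven := integral_neg_add_integral_of_even (continuous_one_sub_sq_rpow hs)
    (fun u => by simp only [neg_sq]) 0 1
  have hbeta := integral_rpow_mul_one_sub_rpow (a := 1 / 2) (b := s + 1) one_half_pos
    (by linarith)
  rw [neg_zero, ← two_mul] at heven
  rw [← heven, two_mul_integral_one_sub_sq_rpow, ← Real.Gamma_one_half_eq]
  convert hbeta using 3 <;> ring_nf

noncomputable def capDensity (n : ℕ) (x : ℝ) : ℝ :=
  x ^ (n - 3) * (1 - x ^ 2 / 4) ^ (((n : ℝ) - 4) / 2)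

section CapDensity

variable {n : ℕ}

lemma continuous_capDensity (hn : 4 ≤ n) : Continuous (capDensity n) :=
  (continuous_pow _).mul <| (continuous_const.sub <| (continuous_pow 2).div_const 4).rpow_const
    fun _ => Or.inr (sub_four_div_two_nonneg hn)

lemma capDensity_nonneg {x : ℝ} (hx : 0 ≤ x) (hx2 : x ≤ 2) : 0 ≤ capDensity n x :=
  mul_nonneg (pow_nonneg hx _) (Real.rpow_nonneg (by nlinarith) _)

lemma capDensity_mul_le (hn : 4 ≤ n) {α x : ℝ} (hα : 1 ≤ α) (hx : 0 ≤ x) (hαx : α * x ≤ 2) :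
    capDensity n (α * x) ≤ α ^ (n - 3) * capDensity n x := by
  have hx_le : x ≤ α * x := le_mul_of_one_le_left hx hα
  have hdecr : (1 - (α * x) ^ 2 / 4) ^ (((n : ℝ) - 4) / 2)
      ≤ (1 - x ^ 2 / 4) ^ (((n : ℝ) - 4) / 2) :=
    Real.rpow_le_rpow (by nlinarith) (by nlinarith) (sub_four_div_two_nonneg hn)
  rw [capDensity, capDensity, mul_pow, mul_assoc]
  exact mul_le_mul_of_nonneg_left (mul_le_mul_of_nonneg_left hdecr (by positivity))
    (by positivity)

lemma integral_one_sub_sq_rpow_eq_integral_capDensity (hn : 4 ≤ n) {r : ℝ} (hr : 0 ≤ r)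
    (hr2 : r ≤ 2) :
    ∫ u in (1 - r ^ 2 / 2)..1, (1 - u ^ 2) ^ (((n : ℝ) - 4) / 2)
      = ∫ x in (0 : ℝ)..r, capDensity n x := by
  have hcv := integral_comp_mul_deriv (a := 0) (b := r) (f := fun x => 1 - x ^ 2 / 2)
    (f' := fun x => -x) (g := fun u => (1 - u ^ 2) ^ (((n : ℝ) - 4) / 2))
    (fun x _ => by simpa using ((hasDerivAt_pow 2 x).div_const 2).const_sub 1)
    (by fun_prop) (continuous_one_sub_sq_rpow (sub_four_div_two_nonneg hn))
  have hexp : ((n : ℝ) - 4) / 2 = ((n - 4 : ℕ) : ℝ) / 2 := by rw [Nat.cast_sub hn]; norm_num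
  calc ∫ u in (1 - r ^ 2 / 2)..1, (1 - u ^ 2) ^ (((n : ℝ) - 4) / 2)
      = -∫ u in (1 : ℝ)..(1 - r ^ 2 / 2), (1 - u ^ 2) ^ (((n : ℝ) - 4) / 2) := integral_symm _ _
    _ = -∫ x in (0 : ℝ)..r, (1 - (1 - x ^ 2 / 2) ^ 2) ^ (((n : ℝ) - 4) / 2) * -x := by
        rw [show (1 : ℝ) - 0 ^ 2 / 2 = 1 by norm_num] at hcv
        exact congrArg Neg.neg hcv.symm
    _ = ∫ x in (0 : ℝ)..r, capDensity n x := by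
        rw [← intervalIntegral.integral_neg]
        refine integral_congr fun x hx => ?_
        rw [uIcc_of_le hr] at hx
        have hfactor : 1 - (1 - x ^ 2 / 2) ^ 2 = x ^ 2 * (1 - x ^ 2 / 4) := by ring
        have hpow : x ^ (n - 3) = x ^ (n - 4) * x := by rw [← pow_succ]; congr 1; omega
        simp only [mul_neg, neg_neg, capDensity]
        rw [hfactor, Real.mul_rpow (sq_nonneg x) (by nlinarith [hx.1, hx.2]), hexp,
          sq_rpow_natCast_div_two hx.1, ← hexp, hpow]
        ring

lemma integral_capDensity_mono (hn : 4 ≤ n) {a b : ℝ} (ha : 0 ≤ a) (hab : a ≤ b) (hb : b ≤ 2) :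
    ∫ x in (0 : ℝ)..a, capDensity n x ≤ ∫ x in (0 : ℝ)..b, capDensity n x :=
  integral_mono_interval le_rfl ha hab
    (ae_restrict_of_forall_mem measurableSet_Ioc fun _ hx =>
      capDensity_nonneg hx.1.le (hx.2.trans hb))
    ((continuous_capDensity hn).intervalIntegrable _ _)

lemma integral_capDensity_mul_le (hn : 4 ≤ n) {α r : ℝ} (hα : 1 ≤ α) (hr : 0 ≤ r)
    (hαr : α * r ≤ 2) :
    ∫ x in (0 : ℝ)..α * r, capDensity n x ≤ α ^ (n - 2) * ∫ x in (0 : ℝ)..r, capDensity n x := by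
  have hcont := continuous_capDensity hn
  calc ∫ x in (0 : ℝ)..α * r, capDensity n x = α * ∫ t in (0 : ℝ)..r, capDensity n (α * t) := by
        simp
    _ ≤ α * ∫ t in (0 : ℝ)..r, α ^ (n - 3) * capDensity n t := by
        gcongr
        refine integral_mono_on hr ((hcont.comp (continuous_const_mul α)).intervalIntegrable _ _)
          ((continuous_const.mul hcont).intervalIntegrable _ _) fun t ht => ?_
        exact capDensity_mul_le hn hα ht.1
          ((mul_le_mul_of_nonneg_left ht.2 (by linarith)).trans hαr)
    _ = α ^ (n - 2) * ∫ x in (0 : ℝ)..r, capDensity n x := by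
        rw [intervalIntegral.integral_const_mul, ← mul_assoc, ← pow_succ']
        congr 2
        omega

lemma integral_capDensity_min_mul_le (hn : 4 ≤ n) {α r : ℝ} (hα : 1 ≤ α) (hr : 0 ≤ r) :
    ∫ x in (0 : ℝ)..min (α * r) 2, capDensity n x
      ≤ α ^ (n - 2) * ∫ x in (0 : ℝ)..min r 2, capDensity n x := by
  have hα0 : 0 < α := by linarith
  rcases le_or_gt (α * r) 2 with hαr | hαr
  · rw [min_eq_left hαr, min_eq_left ((le_mul_of_one_le_left hr hα).trans hαr)]
    exact integral_capDensity_mul_le hn hα hr hαr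
  · have hcancel : α * (2 / α) = 2 := mul_div_cancel₀ 2 hα0.ne'
    have hle : 2 / α ≤ min r 2 :=
      le_min ((div_le_iff₀ hα0).mpr (by linarith [mul_comm α r])) (div_le_self zero_le_two hα)
    calc ∫ x in (0 : ℝ)..min (α * r) 2, capDensity n x
        = ∫ x in (0 : ℝ)..α * (2 / α), capDensity n x := by rw [min_eq_right hαr.le, hcancel]
      _ ≤ α ^ (n - 2) * ∫ x in (0 : ℝ)..2 / α, capDensity n x :=
          integral_capDensity_mul_le hn hα (by positivity) hcancel.le
      _ ≤ α ^ (n - 2) * ∫ x in (0 : ℝ)..min r 2, capDensity n x := by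
          gcongr
          exact integral_capDensity_mono hn (by positivity) hle (min_le_right r 2)

lemma bCoef_mul_integral_one_sub_sq_rpow (hn : 4 ≤ n) :
    bCoef n / 2 * ∫ u in (-1 : ℝ)..1, (1 - u ^ 2) ^ (((n : ℝ) - 4) / 2) = 1 := by
  have h4 : (4 : ℝ) ≤ n := by exact_mod_cast hn
  have := Real.Gamma_pos_of_pos (s := ((n : ℝ) - 1) / 2) (by linarith)
  have := Real.Gamma_pos_of_pos (s := ((n : ℝ) - 2) / 2) (by linarith)
  have := Real.sqrt_pos.mpr Real.pi_pos
  rw [integral_one_sub_sq_rpow (sub_four_div_two_nonneg hn), bCoef,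
    show ((n : ℝ) - 4) / 2 + 1 = ((n : ℝ) - 2) / 2 by ring,
    show ((n : ℝ) - 4) / 2 + 3 / 2 = ((n : ℝ) - 1) / 2 by ring]
  field_simp

lemma capAreaExt_eq_integral_capDensity (hn : 4 ≤ n) {r : ℝ} (hr : 0 ≤ r) :
    capAreaExt n r = bCoef n / 2 * ∫ x in (0 : ℝ)..min r 2, capDensity n x := by
  have hnorm := bCoef_mul_integral_one_sub_sq_rpow hn
  have hsqrt2 : Real.sqrt 2 ≤ 2 := by
    rw [Real.sqrt_le_left zero_le_two]; norm_num
  unfold capAreaExt capArea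
  split_ifs with hr1 hr2
  · rw [min_eq_left (hr1.trans hsqrt2),
      integral_one_sub_sq_rpow_eq_integral_capDensity hn hr (hr1.trans hsqrt2)]
  · have h4r : 0 ≤ 4 - r ^ 2 := by nlinarith
    have heven := integral_neg_add_integral_of_even
      (continuous_one_sub_sq_rpow (sub_four_div_two_nonneg hn)) (fun u => by simp only [neg_sq])
      (1 - r ^ 2 / 2) 1
    rw [min_eq_left hr2, ← integral_one_sub_sq_rpow_eq_integral_capDensity hn hr hr2,
      Real.sq_sqrt h4r, show 1 - (4 - r ^ 2) / 2 = -(1 - r ^ 2 / 2) by ring]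
    linear_combination -(bCoef n / 2) * heven - hnorm
  · rw [min_eq_right (le_of_not_ge hr2),
      ← integral_one_sub_sq_rpow_eq_integral_capDensity hn zero_le_two le_rfl,
      show (1 : ℝ) - 2 ^ 2 / 2 = -1 by norm_num, hnorm]

end CapDensity

/-- Lemma: for `n ≥ 4`, `α > 1` and `r > 0`, `P_n(α r) ≤ α^{n-2} P_n(r)`. -/
theorem stmt_14 (n : ℕ) (hn : 4 ≤ n) (α r : ℝ) (hα : 1 < α) (hr : 0 < r) :
    capAreaExt n (α * r) ≤ α ^ (n - 2) * capAreaExt n r := by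
  rw [capAreaExt_eq_integral_capDensity hn (by positivity),
    capAreaExt_eq_integral_capDensity hn hr.le, mul_left_comm]
  exact mul_le_mul_of_nonneg_left (integral_capDensity_min_mul_le hn hα.le hr.le)
    (by linarith [bCoef_pos (n := n) (by omega)])
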